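/- Let $f : \mathbb{H} \to \mathbb{C}$ be a surjective holomorphic function that is automorphic for $\mathrm{SL}_2(\mathbb{Z})$ (i.e., $f(\gamma z) = f(z)$ for all $\gamma$) and nonconstant, and let $p : U \to \mathbb{C}$ be holomorphic on an open set $U \subset \mathbb{C}$ with $U \cap \mathbb{R} \neq \emptyset$. Assume every zero of $f - c$ is isolated for all $c$. Then the equation $f(z) = p(z)$ has infinitely many solutions $z \in U \cap \mathbb{H}$, and moreover $U \cap \mathbb{R}$ lies in the closure of the solution set. -/

import Mathlib

/-!
Fix a real point `x ∈ U` and `z₀ ∈ ℍ` with `f z₀ = p x`. As the zero `z₀` of `f - p x` is isolated,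
`‖f - p x‖ ≥ m > 0` on a small circle around `z₀`. Elements of `SL₂(ℤ)` with a large lower-left
entry `c` map the disc bounded by that circle to within `O(1 / c)` of a rational `a / c`, which can be
taken arbitrarily close to `x`; there `p` differs from `p x` by less than `m / 2`. By
Rouché's theorem `f - p ∘ γ` vanishes at some `z` in the disc, and then `γ z` solves `f = p` because
`f (γ z) = f z`. Hence every point of `U ∩ ℝ` is a limit of solutions, none of which is real, so
there are infinitely many.
-/

open Complex Metric

noncomputable def moebius (a b c d : ℤ) (z : ℂ) : ℂ := (a * z + b) / (c * z + d)

section Moebius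

variable {a b c d : ℤ}

lemma im_mul_re_sub_re_mul_im_eq_im (h : a * d - b * c = 1) (z : ℂ) :
    ((a : ℂ) * z + b).im * ((c : ℂ) * z + d).re - ((a : ℂ) * z + b).re * ((c : ℂ) * z + d).im
      = z.im := by
  have h' : (a : ℝ) * d - b * c = 1 := by exact_mod_cast h
  simp only [add_im, add_re, mul_im, mul_re, intCast_re, intCast_im]
  linear_combination z.im * h'

lemma moebius_im (h : a * d - b * c = 1) (z : ℂ) :
    (moebius a b c d z).im = z.im / normSq ((c : ℂ) * z + d) := by
  rw [moebius, div_im, div_sub_div_same, im_mul_re_sub_re_mul_im_eq_im h z]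

lemma moebius_denom_ne_zero (h : a * d - b * c = 1) {z : ℂ} (hz : 0 < z.im) :
    (c : ℂ) * z + d ≠ 0 := by
  intro h0
  have := im_mul_re_sub_re_mul_im_eq_im h z
  rw [h0, zero_re, zero_im] at this
  linarith

lemma moebius_im_pos (h : a * d - b * c = 1) {z : ℂ} (hz : 0 < z.im) :
    0 < (moebius a b c d z).im := by
  rw [moebius_im h]
  exact div_pos hz (normSq_pos.2 (moebius_denom_ne_zero h hz))

lemma differentiableAt_moebius (h : a * d - b * c = 1) {z : ℂ} (hz : 0 < z.im) :
    DifferentiableAt ℂ (moebius a b c d) z :=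
  ((differentiableAt_id.const_mul _).add_const _).div
    ((differentiableAt_id.const_mul _).add_const _) (moebius_denom_ne_zero h hz)

lemma moebius_sub_div (h : a * d - b * c = 1) (hc : c ≠ 0) {z : ℂ} (hz : 0 < z.im) :
    moebius a b c d z - a / c = -1 / (c * (c * z + d)) := by
  have h' : (a : ℂ) * d - b * c = 1 := by exact_mod_cast h
  have hc' : (c : ℂ) ≠ 0 := by exact_mod_cast hc
  have hden := moebius_denom_ne_zero h hz
  rw [moebius, div_sub_div _ _ hden hc',
    div_eq_div_iff (mul_ne_zero hden hc') (mul_ne_zero hc' hden)]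
  linear_combination (-(c : ℂ) ^ 2 * z - c * d) * h'

lemma norm_moebius_sub_div_le (h : a * d - b * c = 1) (hc : c ≠ 0) {z : ℂ} (hz : 0 < z.im) :
    ‖moebius a b c d z - a / c‖ ≤ 1 / ((c : ℝ) ^ 2 * z.im) := by
  have hc' : (0 : ℝ) < |(c : ℝ)| := abs_pos.2 (by exact_mod_cast hc)
  have hden : |(c : ℝ)| * z.im ≤ ‖(c : ℂ) * z + d‖ := by
    calc |(c : ℝ)| * z.im = |((c : ℂ) * z + d).im| := by
          simp [abs_mul, abs_of_pos hz]
      _ ≤ ‖(c : ℂ) * z + d‖ := abs_im_le_norm _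
  rw [moebius_sub_div h hc hz, norm_div, norm_neg, norm_one, norm_mul, norm_intCast,
    ← sq_abs, sq, mul_assoc]
  gcongr

end Moebius

lemma exists_det_eq_one_abs_sub_mul_le_two (x M : ℝ) :
    ∃ a b c d : ℤ, a * d - b * c = 1 ∧ 0 < c ∧ M < c ∧ |a - c * x| ≤ 2 := by
  obtain ⟨N, hN⟩ := exists_nat_ge M
  obtain ⟨q, hNq, hq⟩ := Nat.exists_infinite_primes (N + 1)
  have hqZ : Prime (q : ℤ) := Nat.prime_iff_prime_int.mp hq
  set n : ℤ := ⌊(q : ℝ) * x⌋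
  obtain ⟨a, han, hqa⟩ : ∃ a : ℤ, (a = n ∨ a = n + 1) ∧ ¬ (q : ℤ) ∣ a := by
    by_cases hn : (q : ℤ) ∣ n
    · refine ⟨n + 1, Or.inr rfl, fun hn1 => hqZ.not_isUnit (isUnit_of_dvd_one ?_)⟩
      simpa using dvd_sub hn1 hn
    · exact ⟨n, Or.inl rfl, hn⟩
  obtain ⟨u, v, huv⟩ := (hqZ.coprime_iff_not_dvd.mpr hqa).symm
  refine ⟨a, -v, q, u, by linear_combination huv, by exact_mod_cast hq.pos, ?_, ?_⟩
  · have : (N : ℝ) < q := by exact_mod_cast hNq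
    push_cast
    linarith
  · have h1 : (n : ℝ) ≤ q * x := Int.floor_le _
    have h2 : (q : ℝ) * x < n + 1 := Int.lt_floor_add_one _
    rw [abs_le]
    rcases han with rfl | rfl <;> push_cast <;> constructor <;> linarith

lemma exists_moebius_mem_ball (x : ℝ) {δ y : ℝ} (hδ : 0 < δ) (hy : 0 < y) :
    ∃ a b c d : ℤ, a * d - b * c = 1 ∧ ∀ z : ℂ, y ≤ z.im → moebius a b c d z ∈ ball (x : ℂ) δ := by
  obtain ⟨a, b, c, d, hdet, hc, hcM, hax⟩ :=
    exists_det_eq_one_abs_sub_mul_le_two x (max (4 / δ) (2 / (δ * y)))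
  have hcR : (0 : ℝ) < c := by exact_mod_cast hc
  have hc1 : (1 : ℝ) ≤ c := by exact_mod_cast hc
  refine ⟨a, b, c, d, hdet, fun z hz => ?_⟩
  have hz0 : 0 < z.im := hy.trans_le hz
  have hcusp : ‖(a : ℂ) / c - x‖ ≤ 2 / c := by
    have hcC : (c : ℂ) ≠ 0 := by exact_mod_cast hc.ne'
    rw [show (a : ℂ) / c - x = (((a - c * x) / c : ℝ) : ℂ) by push_cast; field_simp,
      norm_real, Real.norm_eq_abs, abs_div, abs_of_pos hcR]
    gcongr
  have h4 : 2 / (c : ℝ) < δ / 2 := by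
    have := (le_max_left _ _).trans_lt hcM
    rw [div_lt_iff₀ hδ] at this
    rw [div_lt_iff₀ hcR]
    linarith
  have h2 : 1 / ((c : ℝ) ^ 2 * z.im) < δ / 2 := by
    have := (le_max_right _ _).trans_lt hcM
    rw [div_lt_iff₀ (mul_pos hδ hy)] at this
    rw [div_lt_iff₀ (by positivity)]
    nlinarith [mul_le_mul hc1 hz hy.le hcR.le]
  rw [mem_ball, dist_eq_norm]
  calc ‖moebius a b c d z - x‖ ≤ ‖moebius a b c d z - a / c‖ + ‖(a : ℂ) / c - x‖ :=
        norm_sub_le_norm_sub_add_norm_sub _ _ _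
    _ < δ / 2 + δ / 2 := add_lt_add_of_lt_of_le
        ((norm_moebius_sub_div_le hdet hc.ne' hz0).trans_lt h2) (hcusp.trans h4.le)
    _ = δ := add_halves δ

lemma exists_mem_closedBall_eq_zero_of_norm_lt {h : ℂ → ℂ} {z₀ : ℂ} {r m : ℝ} (hr : 0 < r)
    (hh : DiffContOnCl ℂ h (ball z₀ r)) (hz₀ : ‖h z₀‖ < m)
    (hsphere : ∀ w ∈ sphere z₀ r, m ≤ ‖h w‖) : ∃ z ∈ closedBall z₀ r, h z = 0 := by
  by_contra! hne
  have hm : 0 < m := (norm_nonneg _).trans_lt hz₀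
  have hinv := Complex.norm_le_of_forall_mem_frontier_norm_le isBounded_ball
    (hh.inv (by rwa [closure_ball z₀ hr.ne'])) (C := m⁻¹)
    (fun w hw => by
      rw [frontier_ball z₀ hr.ne'] at hw
      simpa only [Pi.inv_apply, norm_inv] using inv_anti₀ hm (hsphere w hw))
    (subset_closure (mem_ball_self hr))
  rw [Pi.inv_apply, norm_inv] at hinv
  exact hz₀.not_ge ((inv_le_inv₀ (norm_pos_iff.2 (hne z₀ (mem_closedBall_self hr.le))) hm).1 hinv)

/-- A form of Rouché's theorem. -/
lemma exists_mem_closedBall_eq_zero_of_norm_sub_lt {g h : ℂ → ℂ} {z₀ : ℂ} {r m : ℝ} (hr : 0 < r)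
    (hh : DiffContOnCl ℂ h (ball z₀ r)) (hg₀ : g z₀ = 0) (hg : ∀ w ∈ sphere z₀ r, m ≤ ‖g w‖)
    (hgh : ∀ w ∈ closedBall z₀ r, ‖h w - g w‖ < m / 2) : ∃ z ∈ closedBall z₀ r, h z = 0 := by
  refine exists_mem_closedBall_eq_zero_of_norm_lt hr hh (m := m / 2) ?_ fun w hw => ?_
  · simpa [hg₀] using hgh z₀ (mem_closedBall_self hr.le)
  · have := norm_sub_le_norm_add (g w) (h w - g w)
    rw [add_sub_cancel] at this
    linarith [hg w hw, hgh w (sphere_subset_closedBall hw)]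

lemma im_sub_le_im_of_mem_closedBall {z₀ w : ℂ} {r : ℝ} (hw : w ∈ closedBall z₀ r) :
    z₀.im - r ≤ w.im := by
  have := (abs_im_le_norm (w - z₀)).trans (mem_closedBall_iff_norm.1 hw)
  rw [sub_im] at this
  linarith [(abs_le.1 this).1]

lemma exists_forall_sphere_le_norm_sub {f : ℂ → ℂ} {z₀ c : ℂ}
    (hf : ContinuousOn f {z : ℂ | 0 < z.im}) (hz₀ : 0 < z₀.im)
    (hiso : ∃ ε > 0, ∀ w : ℂ, 0 < w.im → w ≠ z₀ → ‖w - z₀‖ < ε → f w ≠ c) :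
    ∃ r > 0, (∀ w ∈ closedBall z₀ r, z₀.im / 2 ≤ w.im) ∧
      ∃ m > 0, ∀ w ∈ sphere z₀ r, m ≤ ‖f w - c‖ := by
  obtain ⟨ε, hε, hiso⟩ := hiso
  have hr : 0 < min (ε / 2) (z₀.im / 2) := lt_min (half_pos hε) (half_pos hz₀)
  have him : ∀ w ∈ closedBall z₀ (min (ε / 2) (z₀.im / 2)), z₀.im / 2 ≤ w.im := fun w hw => by
    linarith [im_sub_le_im_of_mem_closedBall hw, min_le_right (ε / 2) (z₀.im / 2)]
  have hH : ∀ w ∈ sphere z₀ (min (ε / 2) (z₀.im / 2)), 0 < w.im := fun w hw =>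
    (half_pos hz₀).trans_le (him w (sphere_subset_closedBall hw))
  refine ⟨_, hr, him, (isCompact_sphere _ _).exists_forall_le'
    ((hf.mono fun w hw => hH w hw).sub continuousOn_const).norm fun w hw => ?_⟩
  refine norm_pos_iff.2 (sub_ne_zero.2 (hiso w (hH w hw) ?_ ?_))
  · rintro rfl
    simp [hr.ne] at hw
  · rw [← dist_eq_norm, mem_sphere.1 hw]
    linarith [min_le_left (ε / 2) (z₀.im / 2)]

lemma ofReal_mem_closure_setOf_eq {f p : ℂ → ℂ} {U : Set ℂ} {x : ℝ} {z₀ : ℂ}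
    (hf : DifferentiableOn ℂ f {z : ℂ | 0 < z.im})
    (hf_auto : ∀ a b c d : ℤ, a * d - b * c = 1 → ∀ z : ℂ, 0 < z.im →
      f (moebius a b c d z) = f z)
    (hU : IsOpen U) (hp : DifferentiableOn ℂ p U) (hx : (x : ℂ) ∈ U)
    (hz₀ : 0 < z₀.im) (hfz₀ : f z₀ = p x)
    (hiso : ∃ ε > 0, ∀ w : ℂ, 0 < w.im → w ≠ z₀ → ‖w - z₀‖ < ε → f w ≠ p x) :
    (x : ℂ) ∈ closure {z : ℂ | z ∈ U ∧ 0 < z.im ∧ f z = p z} := by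
  obtain ⟨r, hr, him, m, hm, hfm⟩ := exists_forall_sphere_le_norm_sub hf.continuousOn hz₀ hiso
  have hH : ∀ w ∈ closedBall z₀ r, 0 < w.im := fun w hw => (half_pos hz₀).trans_le (him w hw)
  obtain ⟨δ, hδ, hδx⟩ : ∃ δ > 0, ∀ y ∈ ball (x : ℂ) δ, y ∈ U ∧ dist (p y) (p x) < m / 2 :=
    eventually_nhds_iff_ball.1 (Filter.Eventually.and (hU.mem_nhds hx)
      ((hp.continuousOn.continuousAt (hU.mem_nhds hx)).eventually (ball_mem_nhds _ (half_pos hm))))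
  refine Metric.mem_closure_iff.2 fun ε hε => ?_
  obtain ⟨a, b, c, d, hdet, hγ⟩ := exists_moebius_mem_ball x (lt_min hδ hε) (half_pos hz₀)
  have hγ' : ∀ w ∈ closedBall z₀ r, moebius a b c d w ∈ ball (x : ℂ) δ ∧
      dist (x : ℂ) (moebius a b c d w) < ε := fun w hw =>
    ⟨ball_subset_ball (min_le_left _ _) (hγ w (him w hw)),
      dist_comm (x : ℂ) _ ▸ (hγ w (him w hw)).trans_le (min_le_right _ _)⟩
  have hdiff : DiffContOnCl ℂ (fun w => f w - p (moebius a b c d w)) (ball z₀ r) := by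
    refine DifferentiableOn.diffContOnCl fun w hw => DifferentiableAt.differentiableWithinAt ?_
    rw [closure_ball z₀ hr.ne'] at hw
    exact (hf.differentiableAt ((isOpen_lt continuous_const continuous_im).mem_nhds (hH w hw))).sub
      ((hp.differentiableAt (hU.mem_nhds (hδx _ (hγ' w hw).1).1)).comp w
        (differentiableAt_moebius hdet (hH w hw)))
  have hclose : ∀ w ∈ closedBall z₀ r,
      ‖(f w - p (moebius a b c d w)) - (f w - p x)‖ < m / 2 := fun w hw => by
    rw [sub_sub_sub_cancel_left, norm_sub_rev, ← dist_eq_norm]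
    exact (hδx _ (hγ' w hw).1).2
  obtain ⟨z, hz, hz0⟩ :=
    exists_mem_closedBall_eq_zero_of_norm_sub_lt (g := fun w => f w - p x) hr hdiff
      (sub_eq_zero.2 hfz₀) hfm hclose
  refine ⟨moebius a b c d z, ⟨(hδx _ (hγ' z hz).1).1, moebius_im_pos hdet (hH z hz), ?_⟩,
    (hγ' z hz).2⟩
  rw [hf_auto a b c d hdet z (hH z hz)]
  exact sub_eq_zero.1 hz0

theorem automorphic_equation_infinitely_many_solutions_general
    (f : ℂ → ℂ)
    (hf_holo : DifferentiableOn ℂ f {z : ℂ | 0 < z.im})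
    (hf_surj : ∀ c : ℂ, ∃ z : ℂ, 0 < z.im ∧ f z = c)
    (hf_auto : ∀ a b c d : ℤ, a * d - b * c = 1 → ∀ z : ℂ, 0 < z.im →
      f (((a : ℂ) * z + b) / ((c : ℂ) * z + d)) = f z)
    (hf_isolated : ∀ c : ℂ, ∀ z : ℂ, 0 < z.im → f z = c →
      ∃ ε > 0, ∀ w : ℂ, 0 < w.im → w ≠ z → ‖w - z‖ < ε → f w ≠ c)
    (U : Set ℂ) (hU_open : IsOpen U) (hU_real : ∃ x : ℝ, (x : ℂ) ∈ U)
    (p : ℂ → ℂ) (hp : DifferentiableOn ℂ p U) :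
    {z : ℂ | z ∈ U ∧ 0 < z.im ∧ f z = p z}.Infinite ∧
    ∀ x : ℝ, (x : ℂ) ∈ U →
      (x : ℂ) ∈ closure {z : ℂ | z ∈ U ∧ 0 < z.im ∧ f z = p z} := by
  have hclosure : ∀ x : ℝ, (x : ℂ) ∈ U →
      (x : ℂ) ∈ closure {z : ℂ | z ∈ U ∧ 0 < z.im ∧ f z = p z} := fun x hx => by
    obtain ⟨z₀, hz₀, hfz₀⟩ := hf_surj (p x)
    exact ofReal_mem_closure_setOf_eq hf_holo hf_auto hU_open hp hx hz₀ hfz₀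
      (hf_isolated _ z₀ hz₀ hfz₀)
  obtain ⟨x, hx⟩ := hU_real
  -- a finite set is closed, and the real point `x` is not a solution
  refine ⟨fun hfin => ?_, hclosure⟩
  simpa using (hfin.isClosed.closure_subset (hclosure x hx)).2.1

/-- if `f` is holomorphic on the upper half-plane, surjective, automorphic
for `SL₂(ℤ)`, nonconstant, with isolated fibers, and `p` is holomorphic on an open set `U`
meeting `ℝ`, then `f(z) = p(z)` has infinitely many solutions in `U ∩ ℍ`, and `U ∩ ℝ` lies
in the closure of the solution set. -/
theorem automorphic_equation_infinitely_many_solutions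
    (f : ℂ → ℂ)
    (hf_holo : DifferentiableOn ℂ f {z : ℂ | 0 < z.im})
    (hf_surj : ∀ c : ℂ, ∃ z : ℂ, 0 < z.im ∧ f z = c)
    (hf_auto : ∀ a b c d : ℤ, a * d - b * c = 1 → ∀ z : ℂ, 0 < z.im →
      f (((a : ℂ) * z + b) / ((c : ℂ) * z + d)) = f z)
    (hf_nonconst : ∃ z w : ℂ, 0 < z.im ∧ 0 < w.im ∧ f z ≠ f w)
    (hf_isolated : ∀ c : ℂ, ∀ z : ℂ, 0 < z.im → f z = c →
      ∃ ε > 0, ∀ w : ℂ, 0 < w.im → w ≠ z → ‖w - z‖ < ε → f w ≠ c)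
    (U : Set ℂ) (hU_open : IsOpen U) (hU_real : ∃ x : ℝ, (x : ℂ) ∈ U)
    (p : ℂ → ℂ) (hp : DifferentiableOn ℂ p U) :
    {z : ℂ | z ∈ U ∧ 0 < z.im ∧ f z = p z}.Infinite ∧
    ∀ x : ℝ, (x : ℂ) ∈ U →
      (x : ℂ) ∈ closure {z : ℂ | z ∈ U ∧ 0 < z.im ∧ f z = p z} :=
  automorphic_equation_infinitely_many_solutions_general f hf_holo hf_surj hf_auto hf_isolated U
    hU_open hU_real p hp
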